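/- Let K be a field of characteristic zero, and let g₁,...,gₙ ∈ K[[x]] be nonzero series with pairwise distinct orders d₁,...,dₙ. Then the order of W(g₁,...,gₙ) equals d₁+⋯+dₙ−C(n,2), and its lowest-order coefficient equals ∏_{i<j}(dⱼ−dᵢ)·∏ᵢ cᵢ, where cᵢ is the leading (lowest-order) coefficient of gᵢ. -/

import Mathlib

/-!
Multiplying the `i`-th row of the Wronskian matrix by `X ^ i` replaces `D ^ i` by the
order-preserving operator `X ^ i D ^ i`, which scales the `m`-th coefficient by the falling
factorial `m (m - 1) ⋯ (m - i + 1)`. Hence `X ^ (n choose 2) W = X ^ (∑ dⱼ) u`, where the constant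
term of `u` is the determinant of the falling factorials `dⱼ (dⱼ - 1) ⋯ (dⱼ - i + 1)` times `∏ cⱼ`.
The falling factorials are monic of degree `i`, so that determinant is the Vandermonde determinant
of the `dⱼ`, nonzero for distinct `dⱼ` in characteristic zero.
-/

open PowerSeries Finset

namespace PowerSeries

variable {R : Type*} [CommRing R]

theorem coeff_X_pow_mul_iterate_derivative (f : R⟦X⟧) (i m : ℕ) :
    coeff m (X ^ i * (derivative R)^[i] f) = (m.descFactorial i : R) * coeff m f := by
  rw [coeff_X_pow_mul']
  split_ifs with him
  · obtain ⟨k, rfl⟩ := Nat.exists_eq_add_of_le' him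
    rw [Nat.add_sub_cancel, coeff_iterate_derivative, Nat.add_descFactorial_eq_ascFactorial]
  · rw [Nat.descFactorial_of_lt (not_le.mp him), Nat.cast_zero, zero_mul]

theorem X_pow_dvd_X_pow_mul_iterate_derivative {f : R⟦X⟧} {d : ℕ} (hf : X ^ d ∣ f) (i : ℕ) :
    X ^ d ∣ X ^ i * (derivative R)^[i] f := by
  rw [X_pow_dvd_iff] at hf ⊢
  intro m hm
  rw [coeff_X_pow_mul_iterate_derivative, hf m hm, mul_zero]

theorem order_eq_sub_and_coeff_of_X_pow_mul_eq [IsDomain R] {f u : R⟦X⟧} {a b : ℕ}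
    (hu : constantCoeff u ≠ 0) (h : X ^ a * f = X ^ b * u) :
    f.order = (b - a : ℕ) ∧ coeff (b - a) f = constantCoeff u := by
  have hu₀ : u.order = 0 := by
    by_contra h'
    exact hu (order_ne_zero_iff_constCoeff_eq_zero.mp h')
  have horder : (a : ℕ∞) + f.order = b := by
    simpa [order_mul, order_X_pow, hu₀] using congrArg order h
  have hab : a ≤ b := by exact_mod_cast horder ▸ le_self_add
  obtain ⟨k, rfl⟩ := Nat.exists_eq_add_of_le hab
  rw [Nat.add_sub_cancel_left]
  constructor
  · push_cast at horder
    exact WithTop.add_left_cancel (ENat.natCast_ne_top a) horder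
  · rw [← coeff_X_pow_mul f a, h]
    simpa [add_comm] using coeff_X_pow_mul u (a + k) 0

end PowerSeries

namespace Matrix

variable {R : Type*} [CommRing R] [IsDomain R] {n : ℕ}

theorem det_of_descPochhammer_eval (x : Fin n → R) :
    (of fun i j : Fin n => (descPochhammer R i).eval (x j)).det =
      ∏ i, ∏ j ∈ Ioi i, (x j - x i) := by
  rw [← det_transpose, ← det_vandermonde,
    det_eval_matrixOfPolynomials_eq_det_vandermonde x _
      (fun i => descPochhammer_natDegree R i) (fun i => monic_descPochhammer R i)]
  rfl

theorem det_of_descFactorial_mul (d : Fin n → ℕ) (c : Fin n → R) :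
    (of fun i j : Fin n => ((d j).descFactorial i : R) * c j).det =
      (∏ i, ∏ j ∈ Ioi i, ((d j : R) - d i)) * ∏ j, c j := by
  calc _ = (of fun i j : Fin n => c j * (descPochhammer R i).eval (d j : R)).det := by
        simp only [descPochhammer_eval_eq_descFactorial, mul_comm]
    _ = (∏ j, c j) * (of fun i j : Fin n => (descPochhammer R i).eval (d j : R)).det :=
        det_mul_row _ _
    _ = _ := by rw [det_of_descPochhammer_eval, mul_comm]

end Matrix

namespace PowerSeries

variable {R : Type*} [CommRing R] {n : ℕ}

noncomputable def wronskian (g : Fin n → R⟦X⟧) : R⟦X⟧ :=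
  (Matrix.of fun i j : Fin n => (derivative R)^[i] (g j)).det

theorem X_pow_choose_two_mul_wronskian (g : Fin n → R⟦X⟧) :
    X ^ n.choose 2 * wronskian g =
      (Matrix.of fun i j : Fin n => X ^ (i : ℕ) * (derivative R)^[i] (g j)).det := by
  calc _ = (∏ i : Fin n, X ^ (i : ℕ)) * wronskian g := by
        rw [prod_pow_eq_pow_sum, Fin.sum_univ_eq_sum_range (fun i => i) n, sum_range_id,
          Nat.choose_two_right]
    _ = _ := (Matrix.det_mul_column _ _).symm

theorem exists_X_pow_choose_two_mul_wronskian_eq {g : Fin n → R⟦X⟧} {d : Fin n → ℕ}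
    (hg : ∀ j, X ^ d j ∣ g j) :
    ∃ u, X ^ n.choose 2 * wronskian g = X ^ (∑ j, d j) * u ∧
      constantCoeff u =
        (Matrix.of fun i j : Fin n => ((d j).descFactorial i : R) * coeff (d j) (g j)).det := by
  choose h hh using fun (i : Fin n) j => X_pow_dvd_X_pow_mul_iterate_derivative (hg j) i
  refine ⟨(Matrix.of h).det, ?_, ?_⟩
  · rw [X_pow_choose_two_mul_wronskian, ← prod_pow_eq_pow_sum]
    simp_rw [hh]
    exact Matrix.det_mul_row _ _
  · rw [RingHom.map_det]
    congr 1
    ext i j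
    rw [RingHom.mapMatrix_apply, Matrix.map_apply, Matrix.of_apply, Matrix.of_apply,
      ← coeff_X_pow_mul_iterate_derivative, hh]
    simpa using (coeff_X_pow_mul (h i j) (d j) 0).symm

end PowerSeries

theorem wronskian_order_and_leading_coeff_general {K : Type*} [Field K] [CharZero K]
    (n : ℕ) (g : Fin n → PowerSeries K) (d : Fin n → ℕ)
    (hd : ∀ i, (g i).order = (d i : ℕ∞))
    (hdist : Function.Injective d) :
    (Matrix.det (Matrix.of fun i j : Fin n =>
        (fun h => PowerSeries.derivative K h)^[(i : ℕ)] (g j))).order =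
      ((∑ i, d i - n.choose 2 : ℕ) : ℕ∞) ∧
    PowerSeries.coeff (R := K) (∑ i, d i - n.choose 2)
        (Matrix.det (Matrix.of fun i j : Fin n =>
          (fun h => PowerSeries.derivative K h)^[(i : ℕ)] (g j))) =
      (∏ i : Fin n, ∏ j ∈ Ioi i, ((d j : K) - (d i : K))) *
        ∏ i, PowerSeries.coeff (R := K) (d i) (g i) := by
  show (wronskian g).order = _ ∧ coeff _ (wronskian g) = _
  have hdvd : ∀ j, X ^ d j ∣ g j := fun j =>
    X_pow_dvd_iff.mpr fun m hm => coeff_of_lt_order m (by rw [hd j]; exact_mod_cast hm)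
  have hlead : ∀ j, coeff (d j) (g j) ≠ 0 := fun j => (order_eq_nat.mp (hd j)).1
  have hvdm : ∏ i : Fin n, ∏ j ∈ Ioi i, ((d j : K) - d i) ≠ 0 :=
    prod_ne_zero_iff.mpr fun i _ => prod_ne_zero_iff.mpr fun j hj =>
      sub_ne_zero.mpr fun h => (mem_Ioi.mp hj).ne' (hdist (Nat.cast_injective h))
  obtain ⟨u, hWu, hu⟩ := exists_X_pow_choose_two_mul_wronskian_eq hdvd
  rw [Matrix.det_of_descFactorial_mul] at hu
  rw [← hu]
  exact order_eq_sub_and_coeff_of_X_pow_mul_eq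
    (hu ▸ mul_ne_zero hvdm (prod_ne_zero_iff.mpr fun j _ => hlead j)) hWu

theorem wronskian_order_and_leading_coeff {K : Type*} [Field K] [CharZero K]
    (n : ℕ) (g : Fin n → PowerSeries K) (d : Fin n → ℕ)
    (hg : ∀ i, g i ≠ 0) (hd : ∀ i, (g i).order = (d i : ℕ∞))
    (hdist : Function.Injective d) :
    (Matrix.det (Matrix.of fun i j : Fin n =>
        (fun h => PowerSeries.derivative K h)^[(i : ℕ)] (g j))).order =
      ((∑ i, d i - n.choose 2 : ℕ) : ℕ∞) ∧
    PowerSeries.coeff (R := K) (∑ i, d i - n.choose 2)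
        (Matrix.det (Matrix.of fun i j : Fin n =>
          (fun h => PowerSeries.derivative K h)^[(i : ℕ)] (g j))) =
      (∏ i : Fin n, ∏ j ∈ Ioi i, ((d j : K) - (d i : K))) *
        ∏ i, PowerSeries.coeff (R := K) (d i) (g i) :=
  wronskian_order_and_leading_coeff_general n g d hd hdist
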